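/- arXiv:2603.03793 — 5 statements merged into one kernel-verified Lean document; each statement's English description precedes it below -/
import Mathlib

section
/- Let Δ be a simplicial complex on [k], let q be a prime power, and let u ∈ F_q^k have support of size at least 2. Then there exists a vector u' ∈ F_q^k whose support is a single element of supp(u), with u' agreeing with u on that element, such that the number of nonempty faces σ ∈ Δ with Σ_{v∈σ} u'_v ≠ 0 is at most the number of nonempty faces σ ∈ Δ with Σ_{v∈σ} u_v ≠ 0. -/
theorem stmt_1 (k : ℕ) (F : Type*) [Field F] [Fintype F] [DecidableEq F]
    (Δ : Finset (Finset (Fin k)))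
    (hΔ : ∀ σ ∈ Δ, ∀ τ ⊆ σ, τ ∈ Δ)
    (u : Fin k → F)
    (hsupp : 2 ≤ (Finset.univ.filter (fun i => u i ≠ 0)).card) :
    ∃ i : Fin k, u i ≠ 0 ∧
      (Δ.filter (fun σ => σ ≠ ∅ ∧
          ∑ v ∈ σ, (fun j => if j = i then u i else 0) v ≠ 0)).card
        ≤ (Δ.filter (fun σ => σ ≠ ∅ ∧ ∑ v ∈ σ, u v ≠ 0)).card := by
  obtain ⟨i, hi⟩ : ∃ i, u i ≠ 0 := by
    have h0 : 0 < (Finset.univ.filter (fun i => u i ≠ 0)).card := by omega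
    obtain ⟨i, hi⟩ := Finset.card_pos.mp h0
    exact ⟨i, (Finset.mem_filter.mp hi).2⟩
  refine ⟨i, hi, ?_⟩
  -- membership implies i ∈ σ
  have key : ∀ σ ∈ Δ.filter (fun σ => σ ≠ ∅ ∧
      ∑ v ∈ σ, (fun j => if j = i then u i else 0) v ≠ 0), i ∈ σ := by
    intro σ hσ
    simp only [Finset.mem_filter] at hσ
    by_contra h
    exact hσ.2.2 (by simp [Finset.sum_ite_eq' σ i (fun _ => u i), h])
  apply Finset.card_le_card_of_injOn
    (fun σ => if ∑ v ∈ σ, u v ≠ 0 then σ else σ.erase i)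
  · intro σ hσ
    have hiσ := key σ hσ
    simp only [Finset.mem_coe, Finset.mem_filter] at hσ ⊢
    obtain ⟨hσΔ, hne, _⟩ := hσ
    by_cases hs : ∑ v ∈ σ, u v ≠ 0
    · rw [if_pos hs]; exact ⟨hσΔ, hne, hs⟩
    · push_neg at hs
      have hsum : ∑ v ∈ σ.erase i, u v = -u i := by
        rw [Finset.sum_erase_eq_sub hiσ, hs]; ring
      have hene : σ.erase i ≠ ∅ := by
        intro h
        have : σ = {i} := by
          apply Finset.eq_singleton_iff_unique_mem.mpr
          refine ⟨hiσ, fun x hx => ?_⟩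
          by_contra hxi
          exact absurd h (Finset.ne_empty_of_mem (Finset.mem_erase.mpr ⟨hxi, hx⟩))
        rw [this, Finset.sum_singleton] at hs
        exact hi hs
      rw [if_neg (by simp [hs])]
      exact ⟨hΔ σ hσΔ _ (Finset.erase_subset i σ), hene, by rw [hsum]; simpa using hi⟩
  · intro σ hσ τ hτ heq
    have hiσ := key σ hσ
    have hiτ := key τ hτ
    simp only at heq
    by_cases hs : ∑ v ∈ σ, u v ≠ 0 <;> by_cases ht : ∑ v ∈ τ, u v ≠ 0 <;>
      simp [hs, ht] at heq
    · exact heq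
    · exact absurd (heq ▸ hiσ) (Finset.notMem_erase i τ)
    · exact absurd (heq ▸ hiτ) (Finset.notMem_erase i σ)
    · have := congrArg (insert i) heq
      rwa [Finset.insert_erase hiσ, Finset.insert_erase hiτ] at this
end

section
/- Let Δ be a simplicial complex on [k] containing all singletons {i} for i ∈ [k], and let q be a prime power. Then the minimum nonzero weight of the code C_Δ (the minimum over nonzero u ∈ F_q^k of the number of nonempty faces σ with Σ_{v∈σ} u_v ≠ 0) equals the minimum over vertices i ∈ [k] of the number of faces of Δ containing i. -/
/-!
A vertex `i` with `u i ≠ 0` gives an injection from the faces through `i` into the faces on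
which `u` has nonzero sum: keep `σ` if its sum is nonzero, and otherwise drop `i` from it,
which leaves the sum `-u i ≠ 0`. This is injective since `i` lies in the image exactly when
`σ` was kept. So every nonzero weight is at least some vertex degree, and
the degree of `i` is attained as the weight of the indicator vector of `i`.
-/

open Finset

theorem Nat.sInf_eq_sInf_of_subset_of_forall_exists_le {S T : Set ℕ} (hTS : T ⊆ S)
    (h : ∀ s ∈ S, ∃ t ∈ T, t ≤ s) : sInf S = sInf T := by
  rcases S.eq_empty_or_nonempty with rfl | hS
  · rw [Set.subset_empty_iff.mp hTS]
  obtain ⟨t, ht, hle⟩ := h _ (Nat.sInf_mem hS)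
  exact le_antisymm (Nat.sInf_le (hTS (Nat.sInf_mem ⟨t, ht⟩))) ((Nat.sInf_le ht).trans hle)

section DownClosed

variable {α M : Type*} [DecidableEq α] [AddCommGroup M] [DecidableEq M]

theorem card_filter_mem_le_card_filter_sum_ne_zero {Δ : Finset (Finset α)}
    (hΔ : ∀ σ ∈ Δ, ∀ τ ⊆ σ, τ ∈ Δ) {u : α → M} {i : α} (hi : u i ≠ 0) :
    #{σ ∈ Δ | i ∈ σ} ≤ #{σ ∈ Δ | σ ≠ ∅ ∧ ∑ v ∈ σ, u v ≠ 0} := by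
  refine card_le_card_of_injOn (fun σ => if ∑ v ∈ σ, u v ≠ 0 then σ else σ.erase i) ?_ ?_
  · intro σ hσ
    simp only [coe_filter, Set.mem_ofPred_eq] at hσ ⊢
    split_ifs with hsum
    · exact ⟨hσ.1, ne_empty_of_mem hσ.2, hsum⟩
    · have hsum_erase : ∑ v ∈ σ.erase i, u v = -u i := by
        rw [sum_erase_eq_sub hσ.2, not_not.mp hsum, zero_sub]
      refine ⟨hΔ σ hσ.1 _ (erase_subset i σ), fun hempty => ?_, ?_⟩
      · rw [hempty, sum_empty, eq_comm, neg_eq_zero] at hsum_erase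
        exact hi hsum_erase
      · rwa [hsum_erase, neg_ne_zero]
  · intro σ hσ τ hτ heq
    simp only [coe_filter, Set.mem_ofPred_eq] at hσ hτ heq
    split_ifs at heq with hσsum hτsum hτsum
    · exact heq
    · exact absurd (heq ▸ hσ.2) (notMem_erase i τ)
    · exact absurd (heq ▸ hτ.2) (notMem_erase i σ)
    · rw [← insert_erase hσ.2, heq, insert_erase hτ.2]

end DownClosed

theorem card_filter_sum_single_ne_zero {α M : Type*} [DecidableEq α] [AddCommMonoid M]
    [DecidableEq M] (Δ : Finset (Finset α)) (i : α) {m : M} (hm : m ≠ 0) :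
    #{σ ∈ Δ | σ ≠ ∅ ∧ ∑ v ∈ σ, Pi.single i m v ≠ 0} = #{σ ∈ Δ | i ∈ σ} := by
  congr 1
  refine filter_congr fun σ _ => ?_
  rw [sum_pi_single']
  by_cases hiσ : i ∈ σ
  · simp [hiσ, hm, ne_empty_of_mem hiσ]
  · simp [hiσ]

theorem stmt_3_general (k : ℕ) (F : Type*) [Field F] [DecidableEq F]
    (Δ : Finset (Finset (Fin k)))
    (hΔ : ∀ σ ∈ Δ, ∀ τ ⊆ σ, τ ∈ Δ) :
    sInf {w : ℕ | ∃ u : Fin k → F, u ≠ 0 ∧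
        w = (Δ.filter (fun σ => σ ≠ ∅ ∧ ∑ v ∈ σ, u v ≠ 0)).card}
      = sInf {m : ℕ | ∃ i : Fin k, m = (Δ.filter (fun σ => i ∈ σ)).card} := by
  apply Nat.sInf_eq_sInf_of_subset_of_forall_exists_le
  · rintro _ ⟨i, rfl⟩
    exact ⟨Pi.single i 1, Pi.single_ne_zero_iff.mpr one_ne_zero,
      (card_filter_sum_single_ne_zero Δ i one_ne_zero).symm⟩
  · rintro _ ⟨u, hu, rfl⟩
    obtain ⟨i, hi⟩ := Function.ne_iff.mp hu
    exact ⟨_, ⟨i, rfl⟩, card_filter_mem_le_card_filter_sum_ne_zero hΔ hi⟩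

theorem stmt_3 (k : ℕ) (hk : 0 < k) (F : Type*) [Field F] [Fintype F] [DecidableEq F]
    (Δ : Finset (Finset (Fin k)))
    (hΔ : ∀ σ ∈ Δ, ∀ τ ⊆ σ, τ ∈ Δ)
    (hsingl : ∀ i : Fin k, {i} ∈ Δ) :
    sInf {w : ℕ | ∃ u : Fin k → F, u ≠ 0 ∧
        w = (Δ.filter (fun σ => σ ≠ ∅ ∧ ∑ v ∈ σ, u v ≠ 0)).card}
      = sInf {m : ℕ | ∃ i : Fin k, m = (Δ.filter (fun σ => i ∈ σ)).card} :=
  stmt_3_general k F Δ hΔ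
end

section
/- Let Δ be a simplicial complex on [k] whose faces include all singletons, with maximal faces A_1, …, A_s satisfying A_i \setminus ⋃_{j≠i} A_j ≠ ∅ for each i. Then over F_2 the code C_Δ has length |Δ| − 1 (the number of nonempty faces), dimension k, and minimum distance min{2^{|A_i|−1} : i ∈ [s]}. -/
open Finset

lemma halfCount {k : ℕ} (A T : Finset (Fin k)) (hTA : T ⊆ A) (hT : T.Nonempty) :
    ((A.powerset).filter (fun σ => Odd (σ ∩ T).card)).card = 2 ^ (A.card - 1) := by
  obtain ⟨t, ht⟩ := hT
  have htA : t ∈ A := hTA ht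
  set f : Finset (Fin k) → Finset (Fin k) :=
    fun σ => if t ∈ σ then σ.erase t else insert t σ with hf
  have hsub : ∀ σ ∈ A.powerset, f σ ∈ A.powerset := by
    intro σ hσ
    simp only [mem_powerset] at hσ ⊢
    by_cases h : t ∈ σ <;> simp [hf, h, insert_subset_iff, htA, hσ, (erase_subset t σ).trans hσ]
  have hflip : ∀ σ, Odd ((f σ) ∩ T).card ↔ ¬ Odd (σ ∩ T).card := by
    intro σ
    by_cases h : t ∈ σ
    · have h1 : (σ.erase t) ∩ T = (σ ∩ T).erase t := by
        ext x; simp only [mem_erase, mem_inter]; tauto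
      have h2 : t ∈ σ ∩ T := mem_inter.2 ⟨h, ht⟩
      have h3 : 1 ≤ (σ ∩ T).card := card_pos.2 ⟨t, h2⟩
      simp only [hf, if_pos h, h1, card_erase_of_mem h2, Nat.odd_iff]
      omega
    · have h1 : (insert t σ) ∩ T = insert t (σ ∩ T) := insert_inter_of_mem ht
      have h2 : t ∉ σ ∩ T := fun hc => h (mem_inter.1 hc).1
      simp only [hf, if_neg h, h1, card_insert_of_notMem h2, Nat.odd_iff]
      omega
  have hinv : ∀ σ, f (f σ) = σ := by
    intro σ
    by_cases h : t ∈ σ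
    · simp [hf, h, insert_erase h]
    · simp [hf, h, erase_insert h]
  have hcards : ((A.powerset).filter (fun σ => Odd (σ ∩ T).card)).card
      = ((A.powerset).filter (fun σ => ¬ Odd (σ ∩ T).card)).card := by
    apply Finset.card_nbij' f f
    · intro σ hσ
      simp only [mem_coe, mem_filter] at hσ ⊢
      exact ⟨hsub σ hσ.1, fun hodd => ((hflip σ).1 hodd) hσ.2⟩
    · intro σ hσ
      simp only [mem_coe, mem_filter] at hσ ⊢
      exact ⟨hsub σ hσ.1, (hflip σ).2 hσ.2⟩
    · intro σ _; exact hinv σ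
    · intro σ _; exact hinv σ
  have htot := Finset.card_filter_add_card_filter_not
    (s := A.powerset) (fun σ => Odd (σ ∩ T).card)
  have hpc : A.powerset.card = 2 ^ A.card := card_powerset A
  have hcard1 : 1 ≤ A.card := card_pos.2 ⟨t, htA⟩
  have h2 : 2 ^ A.card = 2 * 2 ^ (A.card - 1) := by
    conv_lhs => rw [show A.card = (A.card - 1) + 1 by omega]
    ring
  omega

lemma sum_ne_zero_iff_odd {k : ℕ} (u : Fin k → ZMod 2) (σ : Finset (Fin k)) :
    (∑ v ∈ σ, u v ≠ 0) ↔ Odd (σ ∩ (univ.filter fun v => u v ≠ 0)).card := by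
  have h2 : ∀ x : ZMod 2, x ≠ 0 → x = 1 := by decide
  have h1 : ∀ v, u v = if u v ≠ 0 then 1 else 0 := by
    intro v
    by_cases h : u v = 0
    · simp [h]
    · simp [h, h2 _ h]
  have hs : (∑ v ∈ σ, u v) = (((σ ∩ (univ.filter fun v => u v ≠ 0)).card : ℕ) : ZMod 2) := by
    rw [Finset.sum_congr rfl (fun v _ => h1 v), Finset.sum_boole]
    have he : σ.filter (fun v => u v ≠ 0) = σ ∩ (univ.filter fun v => u v ≠ 0) := by
      ext x; simp
    rw [he]
  rw [hs, Ne, ZMod.natCast_eq_zero_iff, Nat.odd_iff]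
  omega

/-- The generator linear map of the code associated to a simplicial complex:
`u ↦ (∑_{v ∈ σ} u v)_{∅ ≠ σ ∈ Δ}`. -/
noncomputable def codeMap (k : ℕ) (F : Type*) [Field F]
    (Δ : Finset (Finset (Fin k))) :
    (Fin k → F) →ₗ[F] ({σ : Finset (Fin k) // σ ∈ Δ ∧ σ ≠ ∅} → F) :=
  LinearMap.pi (fun σ => ∑ v ∈ σ.1, LinearMap.proj v)

theorem stmt_5 (k s : ℕ) (hs : 0 < s)
    (Δ : Finset (Finset (Fin k)))
    (hΔ : ∀ σ ∈ Δ, ∀ τ ⊆ σ, τ ∈ Δ)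
    (hsingl : ∀ i : Fin k, {i} ∈ Δ)
    (A : Fin s → Finset (Fin k))
    (hA : ∀ i, A i ∈ Δ)
    (hmax : ∀ i, ∀ σ ∈ Δ, A i ⊆ σ → σ = A i)
    (hgen : ∀ σ ∈ Δ, ∃ i, σ ⊆ A i)
    (hiso : ∀ i : Fin s, (A i \ (Finset.univ.erase i).biUnion A).Nonempty) :
    Fintype.card {σ : Finset (Fin k) // σ ∈ Δ ∧ σ ≠ ∅} = Δ.card - 1 ∧
    Module.finrank (ZMod 2) (LinearMap.range (codeMap k (ZMod 2) Δ)) = k ∧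
    sInf {w : ℕ | ∃ u : Fin k → ZMod 2, u ≠ 0 ∧
        w = (Δ.filter (fun σ => σ ≠ ∅ ∧ ∑ v ∈ σ, u v ≠ 0)).card}
      = sInf {m : ℕ | ∃ i : Fin s, m = 2 ^ ((A i).card - 1)} := by
  have hempty : ∅ ∈ Δ := hΔ (A ⟨0, hs⟩) (hA ⟨0, hs⟩) ∅ (empty_subset _)
  refine ⟨?_, ?_, ?_⟩
  · -- cardinality
    rw [Fintype.card_subtype]
    have he : univ.filter (fun σ : Finset (Fin k) => σ ∈ Δ ∧ σ ≠ ∅) = Δ.erase ∅ := by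
      ext σ; simp [mem_erase, and_comm]
    rw [he, card_erase_of_mem hempty]
  · -- dimension
    have hinj : Function.Injective (codeMap k (ZMod 2) Δ) := by
      rw [injective_iff_map_eq_zero]
      intro u h
      funext v
      have hv := congrFun h ⟨{v}, hsingl v, singleton_ne_empty v⟩
      simpa [codeMap] using hv
    rw [LinearMap.finrank_range_of_inj hinj, Module.finrank_pi, Fintype.card_fin]
  · -- minimum distance
    have lower : ∀ u : Fin k → ZMod 2, u ≠ 0 → ∃ i,
        2 ^ ((A i).card - 1) ≤ (Δ.filter (fun σ => σ ≠ ∅ ∧ ∑ v ∈ σ, u v ≠ 0)).card := by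
      intro u hu
      have hex : ∃ v, u v ≠ 0 := by
        by_contra h; push_neg at h; exact hu (funext h)
      obtain ⟨v, hv⟩ := hex
      obtain ⟨i, hi⟩ := hgen {v} (hsingl v)
      refine ⟨i, ?_⟩
      set S := univ.filter (fun w => u w ≠ 0) with hS
      set T := A i ∩ S with hTdef
      have hTA : T ⊆ A i := inter_subset_left
      have hT : T.Nonempty :=
        ⟨v, mem_inter.2 ⟨hi (mem_singleton_self v), mem_filter.2 ⟨mem_univ v, hv⟩⟩⟩
      rw [← halfCount (A i) T hTA hT]
      apply card_le_card
      intro σ hσ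
      rw [mem_filter] at hσ ⊢
      obtain ⟨hσp, hσo⟩ := hσ
      rw [mem_powerset] at hσp
      have hσT : σ ∩ T = σ ∩ S := by
        rw [hTdef, ← inter_assoc, inter_eq_left.2 hσp]
      have hσS : Odd (σ ∩ S).card := by rwa [hσT] at hσo
      have hne : σ ≠ ∅ := by
        have : (σ ∩ S).Nonempty := card_pos.1 (by rcases hσS with ⟨m, hm⟩; omega)
        obtain ⟨x, hx⟩ := this
        exact ne_empty_of_mem (mem_inter.1 hx).1
      exact ⟨hΔ (A i) (hA i) σ hσp, hne, (sum_ne_zero_iff_odd u σ).2 hσS⟩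
    have upper : ∀ i, ∃ u : Fin k → ZMod 2, u ≠ 0 ∧
        (Δ.filter (fun σ => σ ≠ ∅ ∧ ∑ v ∈ σ, u v ≠ 0)).card = 2 ^ ((A i).card - 1) := by
      intro i
      obtain ⟨x, hx⟩ := hiso i
      rw [mem_sdiff] at hx
      have hxj : ∀ j, j ≠ i → x ∉ A j := fun j hj hc =>
        hx.2 (mem_biUnion.2 ⟨j, mem_erase.2 ⟨hj, mem_univ j⟩, hc⟩)
      refine ⟨fun v => if v = x then 1 else 0, ?_, ?_⟩
      · intro hc
        have := congrFun hc x
        simp at this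
      · have hfe : Δ.filter (fun σ => σ ≠ ∅ ∧ ∑ v ∈ σ, (if v = x then (1:ZMod 2) else 0) ≠ 0)
            = (A i).powerset.filter (fun σ => Odd (σ ∩ ({x} : Finset (Fin k))).card) := by
          ext σ
          simp only [mem_filter, mem_powerset]
          have hsum'' : ∑ v ∈ σ, (if v = x then (1:ZMod 2) else 0)
              = if x ∈ σ then 1 else 0 := Finset.sum_ite_eq' σ x (fun _ => 1)
          have hox : Odd (σ ∩ ({x} : Finset (Fin k))).card ↔ x ∈ σ := by
            by_cases h : x ∈ σ
            · simp [inter_singleton_of_mem h, h]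
            · simp [inter_singleton_of_notMem h, h]
          constructor
          · rintro ⟨hσΔ, _, hsne⟩
            rw [hsum''] at hsne
            have hxσ : x ∈ σ := by
              by_contra h; simp [h] at hsne
            obtain ⟨j, hj⟩ := hgen σ hσΔ
            have hji : j = i := by
              by_contra h; exact hxj j h (hj hxσ)
            subst hji
            exact ⟨hj, hox.2 hxσ⟩
          · rintro ⟨hsub, hodd⟩
            have hxσ := hox.1 hodd
            refine ⟨hΔ (A i) (hA i) σ hsub, ne_empty_of_mem hxσ, ?_⟩
            rw [hsum'']
            simp [hxσ]
        rw [hfe, halfCount (A i) {x} (singleton_subset_iff.2 hx.1) (singleton_nonempty x)]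
    have hMne : Set.Nonempty {m : ℕ | ∃ i : Fin s, m = 2 ^ ((A i).card - 1)} :=
      ⟨2 ^ ((A ⟨0, hs⟩).card - 1), ⟨⟨0, hs⟩, rfl⟩⟩
    obtain ⟨i0, hi0⟩ := Nat.sInf_mem hMne
    obtain ⟨u0, hu0, hw0⟩ := upper i0
    apply le_antisymm
    · exact Nat.sInf_le ⟨u0, hu0, hi0.trans hw0.symm⟩
    · have hWne : Set.Nonempty {w : ℕ | ∃ u : Fin k → ZMod 2, u ≠ 0 ∧
          w = (Δ.filter (fun σ => σ ≠ ∅ ∧ ∑ v ∈ σ, u v ≠ 0)).card} :=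
        ⟨_, u0, hu0, rfl⟩
      obtain ⟨u1, hu1, hw1⟩ := Nat.sInf_mem hWne
      obtain ⟨i1, hle⟩ := lower u1 hu1
      calc sInf {m : ℕ | ∃ i : Fin s, m = 2 ^ ((A i).card - 1)}
          ≤ 2 ^ ((A i1).card - 1) := Nat.sInf_le ⟨i1, rfl⟩
        _ ≤ _ := hw1 ▸ hle
end

section
/- Let {Δ_k}_{k>1} be a family of simplicial complexes on vertex sets [k] with uniformly bounded dimension: there is n_0 with dim Δ_k ≤ n_0 for all k (every face has at most n_0 + 1 vertices). Let d_k denote the minimum over nonzero u ∈ F_q^k of #{x ∈ F_q^k \ {χ_σ : σ ∈ Δ_k} : ⟨u,x⟩ ≠ 0}, and let N_k = q^k − |Δ_k| be the number of points in the complement. Then d_k / N_k → (q−1)/q as k → ∞. -/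
lemma aux_count {F : Type*} [Field F] [Fintype F] [DecidableEq F] {k : ℕ} (hk : 1 ≤ k)
    (u : Fin k → F) (hu : u ≠ 0) :
    (Finset.univ.filter (fun x : Fin k → F => ∑ i, u i * x i = 0)).card
      = Fintype.card F ^ (k - 1) := by
  classical
  set f : (Fin k → F) →+ F :=
    { toFun := fun x => ∑ i, u i * x i
      map_zero' := by simp
      map_add' := by intro x y; simp [mul_add, Finset.sum_add_distrib] } with hf
  have hsurj : Function.Surjective f := by
    obtain ⟨i0, hi0⟩ := Function.ne_iff.mp hu
    simp only [Pi.zero_apply] at hi0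
    intro c
    let y : Fin k → F := Pi.single i0 (c / u i0)
    refine ⟨y, ?_⟩
    have h1 : ∀ i ∈ Finset.univ, u i * y i = if i = i0 then u i0 * (c / u i0) else 0 := by
      intro i _; by_cases h : i = i0 <;> simp [y, Pi.single_apply, h]
    show ∑ i, u i * y i = c
    rw [Finset.sum_congr rfl h1, Finset.sum_ite_eq' Finset.univ i0]
    field_simp
    simp
  have hcardq : Nat.card ((Fin k → F) ⧸ f.ker) = Fintype.card F := by
    rw [Nat.card_congr (QuotientAddGroup.quotientKerEquivOfSurjective f hsurj).toEquiv,
      Nat.card_eq_fintype_card]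
  have htot : Nat.card (Fin k → F) = Nat.card ((Fin k → F) ⧸ f.ker) * Nat.card f.ker :=
    AddSubgroup.card_eq_card_quotient_mul_card_addSubgroup _
  have hker : Nat.card f.ker
      = (Finset.univ.filter (fun x : Fin k → F => ∑ i, u i * x i = 0)).card := by
    rw [Nat.card_eq_fintype_card, Fintype.card_subtype]
    congr 1
    ext x
    simp [AddMonoidHom.mem_ker, hf]
  rw [Nat.card_eq_fintype_card, Fintype.card_fun, Fintype.card_fin, hcardq, hker] at htot
  have hq0 : 0 < Fintype.card F := Fintype.card_pos
  have hpow : Fintype.card F ^ k = Fintype.card F * Fintype.card F ^ (k - 1) := by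
    cases k with
    | zero => omega
    | succ n => simp [pow_succ, mul_comm]
  rw [hpow] at htot
  exact (Nat.eq_of_mul_eq_mul_left hq0 htot.symm)

lemma aux_count_ne {F : Type*} [Field F] [Fintype F] [DecidableEq F] {k : ℕ} (hk : 1 ≤ k)
    (u : Fin k → F) (hu : u ≠ 0) :
    (Finset.univ.filter (fun x : Fin k → F => ∑ i, u i * x i ≠ 0)).card
      = Fintype.card F ^ k - Fintype.card F ^ (k - 1) := by
  classical
  have h := Finset.card_filter_add_card_filter_not
    (s := (Finset.univ : Finset (Fin k → F))) (p := fun x => ∑ i, u i * x i = 0)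
  rw [aux_count hk u hu] at h
  have hcard : (Finset.univ : Finset (Fin k → F)).card = Fintype.card F ^ k := by
    rw [Finset.card_univ, Fintype.card_fun, Fintype.card_fin]
  rw [hcard] at h
  simp only [ne_eq]
  exact Nat.eq_sub_of_add_eq' h

lemma aux_delta_bound {k n0 : ℕ} (Δ : Finset (Finset (Fin k)))
    (hdim : ∀ σ ∈ Δ, σ.card ≤ n0 + 1) :
    Δ.card ≤ (n0 + 2) * (k + 1) ^ (n0 + 1) := by
  classical
  have hsub : Δ ⊆ (Finset.range (n0 + 2)).biUnion
      (fun j => Finset.powersetCard j (Finset.univ : Finset (Fin k))) := by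
    intro σ hσ
    rw [Finset.mem_biUnion]
    exact ⟨σ.card, Finset.mem_range.mpr (by have := hdim σ hσ; omega),
      Finset.mem_powersetCard.mpr ⟨Finset.subset_univ _, rfl⟩⟩
  calc Δ.card ≤ _ := Finset.card_le_card hsub
    _ ≤ ∑ j ∈ Finset.range (n0 + 2), (Finset.powersetCard j (Finset.univ : Finset (Fin k))).card :=
        Finset.card_biUnion_le
    _ ≤ ∑ _j ∈ Finset.range (n0 + 2), (k + 1) ^ (n0 + 1) := by
        refine Finset.sum_le_sum fun j hj => ?_
        rw [Finset.card_powersetCard, Finset.card_univ, Fintype.card_fin]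
        calc k.choose j ≤ k ^ j := Nat.choose_le_pow _ _
          _ ≤ (k + 1) ^ j := Nat.pow_le_pow_left (by omega) _
          _ ≤ (k + 1) ^ (n0 + 1) := Nat.pow_le_pow_right (by omega)
              (by have := Finset.mem_range.mp hj; omega)
    _ = (n0 + 2) * (k + 1) ^ (n0 + 1) := by
        rw [Finset.sum_const, Finset.card_range, smul_eq_mul]

open Filter

theorem stmt_11 (q n0 : ℕ) (F : Type*) [Field F] [Fintype F] [DecidableEq F]
    (hq : Fintype.card F = q)
    (Δ : ∀ k : ℕ, Finset (Finset (Fin k)))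
    (hΔ : ∀ k, ∀ σ ∈ Δ k, ∀ τ ⊆ σ, τ ∈ Δ k)
    (hdim : ∀ k, ∀ σ ∈ Δ k, σ.card ≤ n0 + 1) :
    Filter.Tendsto
      (fun k : ℕ =>
        (Nat.cast
          (sInf {w : ℕ | ∃ u : Fin k → F, u ≠ 0 ∧
            w = (Finset.univ.filter (fun x : Fin k → F =>
                  x ∉ (Δ k).image (fun σ => fun i => if i ∈ σ then (1 : F) else 0) ∧
                  ∑ i, u i * x i ≠ 0)).card}) : ℝ)
          / ((q : ℝ) ^ k - (Δ k).card))
      Filter.atTop (nhds ((q - 1 : ℝ) / q)) := by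
  classical
  have hq2 : 2 ≤ q := hq ▸ Fintype.one_lt_card
  have hqR : (1:ℝ) < (q:ℝ) := by exact_mod_cast hq2
  have hq0 : (0:ℝ) < (q:ℝ) := by linarith
  have hQpos : ∀ k : ℕ, (0:ℝ) < (q:ℝ) ^ k := fun k => pow_pos hq0 k
  -- the ratio |Δ k| / q^k tends to 0
  set e : ℕ → ℝ := fun k => ((Δ k).card : ℝ) / (q:ℝ) ^ k with he_def
  have he : Tendsto e atTop (nhds 0) := by
    have hgeo : Tendsto (fun n : ℕ => (n:ℝ) ^ (n0+1) / (q:ℝ) ^ n) atTop (nhds 0) :=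
      tendsto_pow_const_div_const_pow_of_one_lt (n0+1) hqR
    have hshift : Tendsto (fun k : ℕ => ((k+1 : ℕ):ℝ) ^ (n0+1) / (q:ℝ) ^ (k+1)) atTop (nhds 0) :=
      hgeo.comp (tendsto_add_atTop_nat 1)
    have hg : Tendsto (fun k : ℕ =>
        ((n0+2 : ℕ):ℝ) * q * (((k+1 : ℕ):ℝ) ^ (n0+1) / (q:ℝ) ^ (k+1))) atTop (nhds 0) := by
      simpa using hshift.const_mul (((n0+2 : ℕ):ℝ) * q)
    refine tendsto_of_tendsto_of_tendsto_of_le_of_le tendsto_const_nhds hg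
      (fun k => by positivity) (fun k => ?_)
    have hrw : ((n0+2 : ℕ):ℝ) * q * (((k+1 : ℕ):ℝ) ^ (n0+1) / (q:ℝ) ^ (k+1))
        = (((n0+2) * (k+1) ^ (n0+1) : ℕ) : ℝ) / (q:ℝ) ^ k := by
      push_cast
      rw [pow_succ]
      field_simp
      ring
    rw [hrw]
    show ((Δ k).card : ℝ) / (q:ℝ) ^ k ≤ _
    gcongr
    exact aux_delta_bound (Δ k) (hdim k)
  -- eventually |Δ k| < q^k and 1 - e k > 1/2
  have hsmall : ∀ᶠ k in atTop, e k < 1/2 :=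
    he.eventually (gt_mem_nhds (by norm_num : (0:ℝ) < 1/2))
  -- key cardinality facts
  have hkey : ∀ᶠ k in atTop,
      (q ^ k - q ^ (k-1) ≤ (sInf {w : ℕ | ∃ u : Fin k → F, u ≠ 0 ∧
            w = (Finset.univ.filter (fun x : Fin k → F =>
                  x ∉ (Δ k).image (fun σ => fun i => if i ∈ σ then (1 : F) else 0) ∧
                  ∑ i, u i * x i ≠ 0)).card}) + (Δ k).card
        ∧ (sInf {w : ℕ | ∃ u : Fin k → F, u ≠ 0 ∧
            w = (Finset.univ.filter (fun x : Fin k → F =>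
                  x ∉ (Δ k).image (fun σ => fun i => if i ∈ σ then (1 : F) else 0) ∧
                  ∑ i, u i * x i ≠ 0)).card}) ≤ q ^ k - q ^ (k-1)) := by
    filter_upwards [eventually_ge_atTop 1] with k hk
    set S : Finset (Fin k → F) :=
      (Δ k).image (fun σ => fun i => if i ∈ σ then (1 : F) else 0) with hS
    set T : Set ℕ := {w : ℕ | ∃ u : Fin k → F, u ≠ 0 ∧
            w = (Finset.univ.filter (fun x : Fin k → F =>
                  x ∉ S ∧ ∑ i, u i * x i ≠ 0)).card} with hT
    have hne : T.Nonempty := by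
      refine ⟨_, (Pi.single (⟨0, hk⟩ : Fin k) (1:F)), ?_, rfl⟩
      refine Function.ne_iff.mpr ⟨⟨0, hk⟩, ?_⟩
      simp
    obtain ⟨u, hu, hd⟩ := Nat.sInf_mem hne
    have hcne : (Finset.univ.filter (fun x : Fin k → F => ∑ i, u i * x i ≠ 0)).card
        = q ^ k - q ^ (k-1) := by
      rw [aux_count_ne hk u hu, hq]
    constructor
    · -- lower bound
      rw [hd, ← hcne]
      have hsub : (Finset.univ.filter (fun x : Fin k → F => ∑ i, u i * x i ≠ 0))
          ⊆ (Finset.univ.filter (fun x : Fin k → F => x ∉ S ∧ ∑ i, u i * x i ≠ 0)) ∪ S := by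
        intro x hx
        rw [Finset.mem_filter] at hx
        by_cases hxS : x ∈ S
        · exact Finset.mem_union_right _ hxS
        · exact Finset.mem_union_left _ (Finset.mem_filter.mpr ⟨hx.1, hxS, hx.2⟩)
      calc (Finset.univ.filter (fun x : Fin k → F => ∑ i, u i * x i ≠ 0)).card
          ≤ _ := Finset.card_le_card hsub
        _ ≤ (Finset.univ.filter
              (fun x : Fin k → F => x ∉ S ∧ ∑ i, u i * x i ≠ 0)).card + S.card :=
            Finset.card_union_le _ _
        _ ≤ _ := by
            exact Nat.add_le_add_left Finset.card_image_le _
    · -- upper bound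
      rw [hd, ← hcne]
      refine Finset.card_le_card ?_
      intro x hx
      rw [Finset.mem_filter] at hx ⊢
      exact ⟨hx.1, hx.2.2⟩
  -- squeeze argument
  have hcast : ∀ k : ℕ, 1 ≤ k → ((q ^ k - q ^ (k-1) : ℕ) : ℝ) = (q:ℝ)^k - (q:ℝ)^(k-1) := by
    intro k hk
    have hle : q ^ (k-1) ≤ q ^ k := Nat.pow_le_pow_right (by omega) (by omega)
    rw [Nat.cast_sub hle]
    push_cast
    ring
  have hpq : ∀ k : ℕ, 1 ≤ k → (q:ℝ)^(k-1) * q = (q:ℝ)^k := by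
    intro k hk
    rw [← pow_succ]
    congr 1
    omega
  have hlim : ∀ c : ℝ, Tendsto (fun k : ℕ => (c - e k) / (1 - e k)) atTop (nhds ((c - 0)/(1 - 0))) :=
    fun c => Tendsto.div (tendsto_const_nhds.sub he) (tendsto_const_nhds.sub he) (by norm_num)
  have hlo : Tendsto (fun k : ℕ =>
      ((q:ℝ)^k - (q:ℝ)^(k-1) - (Δ k).card) / ((q:ℝ)^k - (Δ k).card)) atTop
      (nhds ((q - 1 : ℝ) / q)) := by
    have h1 := hlim (1 - 1/(q:ℝ))
    have h2 : ((1:ℝ) - 1/(q:ℝ) - 0)/(1-0) = ((q:ℝ)-1)/q := by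
      field_simp
      ring
    rw [h2] at h1
    refine h1.congr' ?_
    filter_upwards [eventually_ge_atTop 1, hsmall] with k hk hk2
    have hD : ((Δ k).card : ℝ) < (q:ℝ)^k := (div_lt_one (hQpos k)).mp (by
      calc e k < 1/2 := hk2
        _ < 1 := by norm_num)
    have hden : (0:ℝ) < (q:ℝ)^k - (Δ k).card := by linarith
    have h1e : (0:ℝ) < 1 - e k := by
      have : e k < 1 := lt_trans hk2 (by norm_num)
      linarith
    have hP0 : ((q:ℝ))^(k-1) ≠ 0 := ne_of_gt (hQpos (k-1))
    show (1 - 1/(q:ℝ) - e k)/(1 - e k) = _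
    rw [div_eq_div_iff (ne_of_gt h1e) (ne_of_gt hden)]
    simp only [he_def]
    rw [← hpq k hk]
    field_simp
  have hhi : Tendsto (fun k : ℕ =>
      ((q:ℝ)^k - (q:ℝ)^(k-1)) / ((q:ℝ)^k - (Δ k).card)) atTop
      (nhds ((q - 1 : ℝ) / q)) := by
    have h1 := hlim (1 - 1/(q:ℝ))
    have h2 : ((1:ℝ) - 1/(q:ℝ) - 0)/(1-0) = ((q:ℝ)-1)/q := by
      field_simp
      ring
    rw [h2] at h1
    have h3 : Tendsto (fun k : ℕ => ((1:ℝ) - 1/(q:ℝ)) / (1 - e k)) atTop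
        (nhds (((q:ℝ)-1)/q)) := by
      have h4 := Tendsto.div (tendsto_const_nhds (x := (1:ℝ) - 1/(q:ℝ)))
        (tendsto_const_nhds.sub he) (by norm_num : (1:ℝ) - 0 ≠ 0)
      rw [show ((1:ℝ) - 1/(q:ℝ))/(1-0) = ((q:ℝ)-1)/q by field_simp; ring] at h4
      exact h4
    refine h3.congr' ?_
    filter_upwards [eventually_ge_atTop 1, hsmall] with k hk hk2
    have hD : ((Δ k).card : ℝ) < (q:ℝ)^k := (div_lt_one (hQpos k)).mp (by
      calc e k < 1/2 := hk2
        _ < 1 := by norm_num)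
    have hden : (0:ℝ) < (q:ℝ)^k - (Δ k).card := by linarith
    have h1e : (0:ℝ) < 1 - e k := by
      have : e k < 1 := lt_trans hk2 (by norm_num)
      linarith
    have hP0 : ((q:ℝ))^(k-1) ≠ 0 := ne_of_gt (hQpos (k-1))
    show ((1:ℝ) - 1/(q:ℝ))/(1 - e k) = _
    rw [div_eq_div_iff (ne_of_gt h1e) (ne_of_gt hden)]
    simp only [he_def]
    rw [← hpq k hk]
    field_simp
  refine tendsto_of_tendsto_of_tendsto_of_le_of_le' hlo hhi ?_ ?_
  · filter_upwards [eventually_ge_atTop 1, hsmall, hkey] with k hk hk2 hkk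
    have hD : ((Δ k).card : ℝ) < (q:ℝ)^k := (div_lt_one (hQpos k)).mp (by
      calc e k < 1/2 := hk2
        _ < 1 := by norm_num)
    have hden : (0:ℝ) < (q:ℝ)^k - (Δ k).card := by linarith
    have hnum : (q:ℝ)^k - (q:ℝ)^(k-1) - (Δ k).card
        ≤ (((sInf {w : ℕ | ∃ u : Fin k → F, u ≠ 0 ∧
            w = (Finset.univ.filter (fun x : Fin k → F =>
                  x ∉ (Δ k).image (fun σ => fun i => if i ∈ σ then (1 : F) else 0) ∧
                  ∑ i, u i * x i ≠ 0)).card}) : ℕ) : ℝ) := by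
      have h1 := hkk.1
      have h2 : ((q ^ k - q ^ (k-1) : ℕ) : ℝ) ≤ ((sInf _ + (Δ k).card : ℕ) : ℝ) :=
        Nat.cast_le.mpr h1
      rw [hcast k hk] at h2
      push_cast at h2
      linarith
    exact div_le_div_of_nonneg_right hnum hden.le
  · filter_upwards [eventually_ge_atTop 1, hsmall, hkey] with k hk hk2 hkk
    have hD : ((Δ k).card : ℝ) < (q:ℝ)^k := (div_lt_one (hQpos k)).mp (by
      calc e k < 1/2 := hk2
        _ < 1 := by norm_num)
    have hden : (0:ℝ) < (q:ℝ)^k - (Δ k).card := by linarith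
    have hnum : (((sInf {w : ℕ | ∃ u : Fin k → F, u ≠ 0 ∧
            w = (Finset.univ.filter (fun x : Fin k → F =>
                  x ∉ (Δ k).image (fun σ => fun i => if i ∈ σ then (1 : F) else 0) ∧
                  ∑ i, u i * x i ≠ 0)).card}) : ℕ) : ℝ)
        ≤ (q:ℝ)^k - (q:ℝ)^(k-1) := by
      have h2 : ((sInf _ : ℕ) : ℝ) ≤ ((q ^ k - q ^ (k-1) : ℕ) : ℝ) := Nat.cast_le.mpr hkk.2
      rw [hcast k hk] at h2
      exact h2
    exact div_le_div_of_nonneg_right hnum hden.le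
end

section
/- Let Δ₁ and Δ₂ be simplicial complexes on disjoint vertex sets V₁ and V₂, and let Δ = Δ₁ ⊔ Δ₂ be their disjoint union (faces of Δ are faces of Δ₁ together with faces of Δ₂). Let φ: V₁ ∪ V₂ → W be a surjection that is injective on V₁ and on V₂ separately (identifying some vertices of Δ₁ with vertices of Δ₂), and let Δ̃ = {φ(σ) : σ ∈ Δ} be the quotient complex. Then for every vertex w ∈ W, the number of faces of Δ̃ containing w is at least the minimum over v ∈ φ^{-1}(w) of the number of faces of Δ containing v. Consequently, if all singletons are faces, the minimum distance of C_{Δ̃} over F_2 is at least the minimum distance of C_Δ. -/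
/-- If `u x ≠ 0`, the number of faces of a downward-closed complex containing `x`
is at most the number of faces with nonzero sum. -/
lemma lemA {X : Type*} [DecidableEq X] (Γ : Finset (Finset X))
    (hΓ : ∀ σ ∈ Γ, ∀ τ ⊆ σ, τ ∈ Γ) (u : X → ZMod 2) (x : X) (hx : u x ≠ 0) :
    (Γ.filter (fun σ => x ∈ σ)).card ≤
      (Γ.filter (fun σ => σ ≠ ∅ ∧ ∑ v ∈ σ, u v ≠ 0)).card := by
  classical
  apply Finset.card_le_card_of_injOn
    (fun σ => if (∑ v ∈ σ, u v) = 0 then σ.erase x else σ)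
  · intro σ hσ
    simp only [Finset.mem_coe, Finset.mem_filter] at hσ ⊢
    obtain ⟨hσΓ, hxσ⟩ := hσ
    by_cases hs : (∑ v ∈ σ, u v) = 0
    · have herase : ∑ v ∈ σ.erase x, u v = ∑ v ∈ σ, u v - u x := by
        rw [← Finset.add_sum_erase σ u hxσ]; ring
      have hsum : ∑ v ∈ σ.erase x, u v ≠ 0 := by
        rw [herase, hs]
        simpa using hx
      have hne : σ.erase x ≠ ∅ := by
        intro hempty
        rw [hempty] at hsum
        simp at hsum
      rw [if_pos hs]
      exact ⟨hΓ σ hσΓ _ (Finset.erase_subset x σ), hne, hsum⟩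
    · simp only [if_neg hs]
      exact ⟨hσΓ, fun h => hs (by simp [h]), hs⟩
  · intro σ₁ h₁ σ₂ h₂ heq
    simp only [Finset.coe_filter, Set.mem_setOf_eq] at h₁ h₂
    have key : ∀ σ : Finset X, x ∈ σ →
        insert x (if (∑ v ∈ σ, u v) = 0 then σ.erase x else σ) = σ := by
      intro σ hσ
      by_cases hs : (∑ v ∈ σ, u v) = 0
      · simp [hs, Finset.insert_erase hσ]
      · simp [hs, Finset.insert_eq_self.mpr hσ]
    rw [← key σ₁ h₁.2, ← key σ₂ h₂.2]
    exact congrArg (insert x) heq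

/-- Counting faces at a vertex versus its image, given injectivity on faces at `v`. -/
lemma part1_aux {V W : Type*} [DecidableEq V] [DecidableEq W]
    (Δ : Finset (Finset V)) (φ : V → W) (v : V)
    (h : ∀ σ₁ ∈ Δ, ∀ σ₂ ∈ Δ, v ∈ σ₁ → v ∈ σ₂ →
      σ₁.image φ = σ₂.image φ → σ₁ = σ₂) :
    (Δ.filter (fun σ => v ∈ σ)).card ≤
      ((Δ.image (fun σ => σ.image φ)).filter (fun σ => φ v ∈ σ)).card := by
  apply Finset.card_le_card_of_injOn (fun σ => σ.image φ)
  · intro σ hσ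
    obtain ⟨h1, h2⟩ := Finset.mem_filter.mp hσ
    exact Finset.mem_filter.mpr ⟨Finset.mem_image_of_mem _ h1, Finset.mem_image_of_mem φ h2⟩
  · intro σ₁ h₁ σ₂ h₂ heq
    simp only [Finset.coe_filter, Set.mem_setOf_eq] at h₁ h₂
    exact h σ₁ h₁.1 σ₂ h₂.1 h₁.2 h₂.2 heq

/-- Image of a downward-closed complex is downward closed. -/
lemma dc_image {V W : Type*} [DecidableEq V] [DecidableEq W]
    (Δ : Finset (Finset V)) (hΔ : ∀ σ ∈ Δ, ∀ τ ⊆ σ, τ ∈ Δ) (φ : V → W) :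
    ∀ σ ∈ Δ.image (fun σ => σ.image φ), ∀ τ ⊆ σ, τ ∈ Δ.image (fun σ => σ.image φ) := by
  intro σ hσ τ hτ
  simp only [Finset.mem_image] at hσ ⊢
  obtain ⟨ρ, hρ, rfl⟩ := hσ
  refine ⟨ρ.filter (fun x => φ x ∈ τ), hΔ ρ hρ _ (Finset.filter_subset _ _), ?_⟩
  apply Finset.Subset.antisymm
  · intro y hy
    simp only [Finset.mem_image, Finset.mem_filter] at hy
    obtain ⟨x, ⟨_, hx2⟩, rfl⟩ := hy
    exact hx2
  · intro y hy
    have := hτ hy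
    simp only [Finset.mem_image] at this ⊢
    obtain ⟨x, hx, rfl⟩ := this
    exact ⟨x, Finset.mem_filter.mpr ⟨hx, hy⟩, rfl⟩

theorem stmt_19 (V₁ V₂ W : Type*) [Fintype V₁] [Fintype V₂] [Fintype W]
    [DecidableEq V₁] [DecidableEq V₂] [DecidableEq W]
    (Δ₁ : Finset (Finset V₁)) (Δ₂ : Finset (Finset V₂))
    (hΔ₁ : ∀ σ ∈ Δ₁, ∀ τ ⊆ σ, τ ∈ Δ₁)
    (hΔ₂ : ∀ σ ∈ Δ₂, ∀ τ ⊆ σ, τ ∈ Δ₂)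
    (φ : V₁ ⊕ V₂ → W) (hsurj : Function.Surjective φ)
    (hinj₁ : Function.Injective (φ ∘ Sum.inl))
    (hinj₂ : Function.Injective (φ ∘ Sum.inr)) :
    let Δ : Finset (Finset (V₁ ⊕ V₂)) :=
      Δ₁.image (fun σ => σ.image Sum.inl) ∪ Δ₂.image (fun σ => σ.image Sum.inr)
    let Δq : Finset (Finset W) := Δ.image (fun σ => σ.image φ)
    (∀ w : W, ∃ v : V₁ ⊕ V₂, φ v = w ∧
        (Δ.filter (fun σ => v ∈ σ)).card ≤ (Δq.filter (fun σ => w ∈ σ)).card) ∧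
    ((∀ v : V₁, {v} ∈ Δ₁) → (∀ v : V₂, {v} ∈ Δ₂) →
      sInf {d : ℕ | ∃ u : (V₁ ⊕ V₂) → ZMod 2, u ≠ 0 ∧
          d = (Δ.filter (fun σ => σ ≠ ∅ ∧ ∑ v ∈ σ, u v ≠ 0)).card} ≤
      sInf {d : ℕ | ∃ u : W → ZMod 2, u ≠ 0 ∧
          d = (Δq.filter (fun σ => σ ≠ ∅ ∧ ∑ v ∈ σ, u v ≠ 0)).card}) := by
  intro Δ Δq
  -- structure of faces of Δ containing inl a / inr b
  have hstruct₁ : ∀ σ ∈ Δ, ∀ a : V₁, Sum.inl a ∈ σ →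
      ∃ τ ∈ Δ₁, σ = τ.image Sum.inl := by
    intro σ hσ a ha
    simp only [Δ, Finset.mem_union, Finset.mem_image] at hσ
    rcases hσ with ⟨τ, hτ, rfl⟩ | ⟨τ, hτ, rfl⟩
    · exact ⟨τ, hτ, rfl⟩
    · simp at ha
  have hstruct₂ : ∀ σ ∈ Δ, ∀ b : V₂, Sum.inr b ∈ σ →
      ∃ τ ∈ Δ₂, σ = τ.image Sum.inr := by
    intro σ hσ b hb
    simp only [Δ, Finset.mem_union, Finset.mem_image] at hσ
    rcases hσ with ⟨τ, hτ, rfl⟩ | ⟨τ, hτ, rfl⟩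
    · simp at hb
    · exact ⟨τ, hτ, rfl⟩
  -- injectivity of the image map on faces containing a given vertex
  have hkey : ∀ v : V₁ ⊕ V₂, ∀ σ₁ ∈ Δ, ∀ σ₂ ∈ Δ, v ∈ σ₁ → v ∈ σ₂ →
      σ₁.image φ = σ₂.image φ → σ₁ = σ₂ := by
    intro v σ₁ h₁ σ₂ h₂ hv₁ hv₂ heq
    cases v with
    | inl a =>
      obtain ⟨τ₁, _, rfl⟩ := hstruct₁ σ₁ h₁ a hv₁
      obtain ⟨τ₂, _, rfl⟩ := hstruct₁ σ₂ h₂ a hv₂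
      rw [Finset.image_image, Finset.image_image] at heq
      rw [Finset.image_injective hinj₁ heq]
    | inr b =>
      obtain ⟨τ₁, _, rfl⟩ := hstruct₂ σ₁ h₁ b hv₁
      obtain ⟨τ₂, _, rfl⟩ := hstruct₂ σ₂ h₂ b hv₂
      rw [Finset.image_image, Finset.image_image] at heq
      rw [Finset.image_injective hinj₂ heq]
  have part1 : ∀ w : W, ∃ v : V₁ ⊕ V₂, φ v = w ∧
      (Δ.filter (fun σ => v ∈ σ)).card ≤ (Δq.filter (fun σ => w ∈ σ)).card := by
    intro w
    obtain ⟨v, rfl⟩ := hsurj w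
    exact ⟨v, rfl, part1_aux Δ φ v (hkey v)⟩
  refine ⟨part1, ?_⟩
  intro hone₁ hone₂
  -- downward closure of Δ
  have hΔdc : ∀ σ ∈ Δ, ∀ τ ⊆ σ, τ ∈ Δ := by
    intro σ hσ τ hτ
    simp only [Δ, Finset.mem_union, Finset.mem_image] at hσ ⊢
    rcases hσ with ⟨ρ, hρ, rfl⟩ | ⟨ρ, hρ, rfl⟩
    · refine Or.inl ⟨ρ.filter (fun x => Sum.inl x ∈ τ),
        hΔ₁ ρ hρ _ (Finset.filter_subset _ _), ?_⟩
      apply Finset.Subset.antisymm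
      · intro y hy
        simp only [Finset.mem_image, Finset.mem_filter] at hy
        obtain ⟨x, ⟨_, hx2⟩, rfl⟩ := hy
        exact hx2
      · intro y hy
        have hy' := hτ hy
        simp only [Finset.mem_image] at hy' ⊢
        obtain ⟨x, hx, rfl⟩ := hy'
        exact ⟨x, Finset.mem_filter.mpr ⟨hx, hy⟩, rfl⟩
    · refine Or.inr ⟨ρ.filter (fun x => Sum.inr x ∈ τ),
        hΔ₂ ρ hρ _ (Finset.filter_subset _ _), ?_⟩
      apply Finset.Subset.antisymm
      · intro y hy
        simp only [Finset.mem_image, Finset.mem_filter] at hy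
        obtain ⟨x, ⟨_, hx2⟩, rfl⟩ := hy
        exact hx2
      · intro y hy
        have hy' := hτ hy
        simp only [Finset.mem_image] at hy' ⊢
        obtain ⟨x, hx, rfl⟩ := hy'
        exact ⟨x, Finset.mem_filter.mpr ⟨hx, hy⟩, rfl⟩
  have hΔqdc : ∀ σ ∈ Δq, ∀ τ ⊆ σ, τ ∈ Δq := dc_image Δ hΔdc φ
  set S : Set ℕ := {d : ℕ | ∃ u : (V₁ ⊕ V₂) → ZMod 2, u ≠ 0 ∧
      d = (Δ.filter (fun σ => σ ≠ ∅ ∧ ∑ v ∈ σ, u v ≠ 0)).card} with hS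
  set Sq : Set ℕ := {d : ℕ | ∃ u : W → ZMod 2, u ≠ 0 ∧
      d = (Δq.filter (fun σ => σ ≠ ∅ ∧ ∑ v ∈ σ, u v ≠ 0)).card} with hSq
  -- main claim: every element of Sq is bounded below by an element of S
  have claim : ∀ d ∈ Sq, ∃ d' ∈ S, d' ≤ d := by
    intro d hd
    obtain ⟨u, hu, rfl⟩ := hd
    obtain ⟨w, hw⟩ := Function.ne_iff.mp hu
    have h1 : (Δq.filter (fun σ => w ∈ σ)).card ≤
        (Δq.filter (fun σ => σ ≠ ∅ ∧ ∑ v ∈ σ, u v ≠ 0)).card :=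
      lemA Δq hΔqdc u w (by simpa using hw)
    obtain ⟨v, hφv, h2⟩ := part1 w
    classical
    set u' : (V₁ ⊕ V₂) → ZMod 2 := fun x => if x = v then 1 else 0 with hu'
    have hu'ne : u' ≠ 0 := by
      intro h
      have : u' v = 0 := by rw [h]; rfl
      simp [hu'] at this
    have hsum : ∀ σ : Finset (V₁ ⊕ V₂), (∑ x ∈ σ, u' x) = if v ∈ σ then 1 else 0 := by
      intro σ
      simp only [hu']
      exact Finset.sum_ite_eq' σ v (fun _ => 1)
    have hfilter : Δ.filter (fun σ => σ ≠ ∅ ∧ ∑ x ∈ σ, u' x ≠ 0) =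
        Δ.filter (fun σ => v ∈ σ) := by
      apply Finset.filter_congr
      intro σ _
      rw [hsum σ]
      constructor
      · rintro ⟨-, h⟩
        by_contra hv
        simp [hv] at h
      · intro hv
        refine ⟨fun h => by simp [h] at hv, by simp [hv]⟩
    refine ⟨(Δ.filter (fun σ => v ∈ σ)).card, ⟨u', hu'ne, hfilter.symm ▸ rfl⟩, ?_⟩
    exact le_trans h2 (hφv ▸ h1)
  by_cases hne : Sq.Nonempty
  · obtain ⟨d', hd', hle⟩ := claim _ (Nat.sInf_mem hne)
    exact le_trans (Nat.sInf_le hd') hle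
  · rw [Set.not_nonempty_iff_eq_empty] at hne
    have hSe : S = ∅ := by
      by_contra h
      rw [← Ne, ← Set.nonempty_iff_ne_empty] at h
      obtain ⟨d, u, hu, -⟩ := h
      obtain ⟨x, hx⟩ := Function.ne_iff.mp hu
      classical
      have : ((Δq.filter (fun σ => σ ≠ ∅ ∧ ∑ v ∈ σ,
          (fun y => if y = φ x then (1 : ZMod 2) else 0) v ≠ 0)).card) ∈ Sq := by
        refine ⟨_, ?_, rfl⟩
        intro h0
        have : (if φ x = φ x then (1 : ZMod 2) else 0) = 0 := congrFun h0 (φ x)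
        simp at this
      rw [hne] at this
      exact this
    rw [hSe, hne]
end
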